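/- Let T be a compactly generated triangulated category and f a morphism in T^c, with associated coherent functor F_f := coker(Hom(f,-)). Then every coherent subfunctor of F_f has the form im(Hom(h,-))/im(Hom(f,-)) for some factorisation f = g∘h of f in T^c. -/

import Mathlib

open CategoryTheory CategoryTheory.Limits

universe w v u

namespace ZG

section Basic

variable {A : Type u} [Category.{v} A]

/-- An object is indecomposable: nonzero and without nontrivial idempotent endomorphisms. -/
def Indec [Preadditive A] (X : A) : Prop :=
  ¬ IsZero X ∧ ∀ e : X ⟶ X, e ≫ e = e → e = 0 ∨ e = 𝟙 X

/-- An object `C` is compact if `Hom(C, —)` (as a functor to abelian groups) preserves all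
set-indexed coproducts. -/
def IsCompactObj [Preadditive A] (C : A) : Prop :=
  ∀ ι : Type v, Nonempty (PreservesColimitsOfShape (Discrete ι)
    (preadditiveCoyoneda.obj (Opposite.op C)))

/-- A category is compactly generated if it has set-indexed coproducts, the subcategory of
compact objects is skeletally small, and every nonzero object receives a nonzero morphism
from a compact object. -/
def CompactlyGenerated [Preadditive A] : Prop :=
  EssentiallySmall.{v} (ObjectProperty.FullSubcategory (fun C : A => IsCompactObj C)) ∧
  ∀ D : A, ¬ IsZero D → ∃ (C : A) (f : C ⟶ D), IsCompactObj C ∧ f ≠ 0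

variable (P : A → Prop)

/-- The restricted Yoneda functor `N ↦ Hom(-,N)|_{P}` into modules over the
full subcategory of objects satisfying `P`. -/
noncomputable def restYoneda [Preadditive A] :
    A ⥤ ((ObjectProperty.FullSubcategory P)ᵒᵖ ⥤ AddCommGrpCat.{v}) :=
  preadditiveYoneda ⋙ (Functor.whiskeringLeft _ _ _).obj (ObjectProperty.ι P).op

/-- `N` is pure-injective if its restricted Yoneda image is an injective object. -/
def PureInj [Preadditive A] (N : A) : Prop := Injective ((restYoneda P).obj N)

/-- Points of the Ziegler spectrum: indecomposable pure-injective objects. -/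
def ZgPt [Preadditive A] : Type u := {N : A // Indec N ∧ PureInj P N}

noncomputable instance zgSetoid [Preadditive A] : Setoid (ZgPt P) :=
  Setoid.comap Subtype.val (isIsomorphicSetoid A)

/-- The underlying set of the Ziegler spectrum: isomorphism classes of indecomposable
pure-injective objects. -/
def Zg [Preadditive A] : Type u := Quotient (zgSetoid P)

noncomputable def zgMk [Preadditive A] (N : ZgPt P) : Zg P := Quotient.mk _ N

end Basic

section Coh

variable (A : Type u) [Category.{v} A]

/-- Covariant additive-group-valued functors on `A`. -/
abbrev ModA := A ⥤ AddCommGrpCat.{v}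

variable {A} (P : A → Prop)

/-- The coherent functor `F_f = coker (Hom(f,-))` associated to a morphism `f`. -/
noncomputable def Ff [Preadditive A] {C D : A} (f : C ⟶ D) : ModA A :=
  cokernel (preadditiveCoyoneda.map f.op)

/-- A functor `A ⥤ Ab` is coherent (relative to the class `P` of "compact" objects) if it has
a presentation `Hom(D,-) ⟶ Hom(C,-) ⟶ F ⟶ 0` with `C, D` satisfying `P`. -/
def IsCoh [Preadditive A] (F : ModA A) : Prop :=
  ∃ (C D : A) (f : C ⟶ D), P C ∧ P D ∧ Nonempty (F ≅ Ff f)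

/-- The basic (compact) open subset of the Ziegler spectrum determined by a coherent functor. -/
def zgOpen [Preadditive A] (F : ModA A) : Set (Zg P) :=
  {x | ∃ N : ZgPt P, zgMk P N = x ∧ ¬ IsZero (F.obj N.val)}

/-- The Ziegler topology. -/
noncomputable instance zgTop [Preadditive A] : TopologicalSpace (Zg P) :=
  TopologicalSpace.generateFrom {U | ∃ F : ModA A, IsCoh P F ∧ U = zgOpen P F}

end Coh

end ZG

namespace ZG

section CB

variable (X : Type w) [TopologicalSpace X]

/-- The Cantor–Bendixson derivative of a subset: the points of `s` which are not isolated in the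
relative topology on `s`. -/
def cbDeriv (s : Set X) : Set X :=
  {x | x ∈ s ∧ ¬ ∃ U : Set X, IsOpen U ∧ U ∩ s = {x}}

/-- Iterated Cantor–Bendixson derivatives of the whole space. -/
def cbIter : ℕ → Set X
  | 0 => Set.univ
  | n + 1 => cbDeriv X (cbIter n)

/-- A point has Cantor–Bendixson rank `n` if it survives `n` derivatives but not `n+1`,
i.e. it becomes isolated after `n` derivatives. -/
def cbRankPt (x : X) (n : ℕ) : Prop :=
  x ∈ cbIter X n ∧ x ∉ cbIter X (n + 1)

/-- The space has Cantor–Bendixson rank `n` if the `(n+1)`-st derivative is empty but the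
`n`-th is not. -/
def cbRankSpace (n : ℕ) : Prop :=
  cbIter X (n + 1) = ∅ ∧ cbIter X n ≠ ∅

end CB

section KG

variable {A : Type u} [Category.{v} A] [Preadditive A] (P : A → Prop)

/-- The subquotient `Y/X` of two nested subobjects. -/
noncomputable def subQuot {F : ModA A} {X Y : Subobject F} (h : X ≤ Y) : ModA A :=
  cokernel (Subobject.ofLE X Y h)

/-- `F` has finite length modulo the class `S`: every ascending and every descending chain of
coherent subfunctors of `F` eventually has all successive subquotients in `S`.  This expresses
that the image of `F` in the Serre quotient by (the Serre subcategory generated by) `S` has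
finite length. -/
def FinLengthMod (S : Set (ModA A)) (F : ModA A) : Prop :=
  (∀ (c : ℕ → Subobject F) (hc : ∀ i, c i ≤ c (i + 1)),
      (∀ i, IsCoh P (Subobject.underlying.obj (c i))) →
      ∃ N, ∀ i, N ≤ i → subQuot (hc i) ∈ S) ∧
  (∀ (c : ℕ → Subobject F) (hc : ∀ i, c (i + 1) ≤ c i),
      (∀ i, IsCoh P (Subobject.underlying.obj (c i))) →
      ∃ N, ∀ i, N ≤ i → subQuot (hc i) ∈ S)

/-- The canonical Krull–Gabriel filtration of the category of coherent functors:
`KGclass n` consists of the coherent functors whose image in the quotient of the category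
of coherent functors by `KGclass (n-1)` has finite length (where `KGclass (-1) = 0`). -/
def KGclass : ℕ → Set (ModA A)
  | 0 => {F | IsCoh P F ∧ FinLengthMod P {G | IsZero G} F}
  | n + 1 => {F | IsCoh P F ∧ FinLengthMod P (KGclass n) F}

/-- The Krull–Gabriel dimension is defined: the canonical filtration exhausts all coherent
functors at a finite stage. -/
def KGDefined : Prop := ∃ n : ℕ, ∀ F : ModA A, IsCoh P F → F ∈ KGclass P n

/-- The Krull–Gabriel dimension equals `n`. -/
def KGEq (n : ℕ) : Prop :=
  (∀ F : ModA A, IsCoh P F → F ∈ KGclass P n) ∧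
  ∀ m : ℕ, m < n → ¬ (∀ F : ModA A, IsCoh P F → F ∈ KGclass P m)

/-- A functor vanishes at a point of the Ziegler spectrum. -/
def vanishesAt (F : ModA A) (x : Zg P) : Prop :=
  ∀ N : ZgPt P, zgMk P N = x → IsZero (F.obj N.val)

/-- The Serre subcategory (of coherent functors) associated to a subset of the Ziegler
spectrum: the coherent functors vanishing on all its points. -/
def SerreOf (X : Set (Zg P)) : Set (ModA A) :=
  {F | IsCoh P F ∧ ∀ x ∈ X, vanishesAt P F x}

/-- The image of a coherent functor `F` in the Serre quotient by `S` is simple. -/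
def SimpleModS (S : Set (ModA A)) (F : ModA A) : Prop :=
  IsCoh P F ∧ F ∉ S ∧
  ∀ G : Subobject F, IsCoh P (Subobject.underlying.obj G) →
    (Subobject.underlying.obj G ∈ S ∨ cokernel G.arrow ∈ S)

/-- A morphism becoming an isomorphism in the Serre quotient by `S`. -/
def SIso (S : Set (ModA A)) {F G : ModA A} (α : F ⟶ G) : Prop :=
  kernel α ∈ S ∧ cokernel α ∈ S

/-- Two functors have isomorphic images in the Serre quotient by `S`. -/
def IsoModS (S : Set (ModA A)) (F G : ModA A) : Prop :=
  ∃ (H : ModA A) (α : H ⟶ F) (β : H ⟶ G), IsCoh P H ∧ SIso S α ∧ SIso S β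

/-- The definable subcategory generated by `M`: all objects killed by every coherent functor
killing `M`. -/
def DefClosure (M : A) : Set A :=
  {N | ∀ F : ModA A, IsCoh P F → IsZero (F.obj M) → IsZero (F.obj N)}

/-- The support of `M`: the points of the Ziegler spectrum lying in the definable subcategory
generated by `M`. -/
def supp (M : A) : Set (Zg P) :=
  {x | ∃ N : ZgPt P, zgMk P N = x ∧ N.val ∈ DefClosure P M}

/-- The isolation condition for the Ziegler spectrum. -/
def IsolationCond : Prop :=
  ∀ X : Set (Zg P), IsClosed X → ∀ x ∈ X, (∃ U : Set (Zg P), IsOpen U ∧ U ∩ X = {x}) →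
    ∃ F : ModA A, IsCoh P F ∧ zgOpen P F ∩ X = {x} ∧ SimpleModS P (SerreOf P X) F

end KG

end ZG

namespace ZG

section ModSide

variable {A : Type u} [Category.{v} A] [Preadditive A] (P : A → Prop)

/-- The module category over the (skeletally small) subcategory of objects satisfying `P`:
contravariant additive-group-valued functors. -/
abbrev ModCat := (ObjectProperty.FullSubcategory P)ᵒᵖ ⥤ AddCommGrpCat.{v}

/-- A module is finitely presented if it is the cokernel of a map of representables. -/
def FinPres (F : ModCat P) : Prop :=
  ∃ (a b : ObjectProperty.FullSubcategory P) (g : a ⟶ b),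
    Nonempty (F ≅ cokernel (preadditiveYoneda.map g))

/-- A pure monomorphism in the module category, characterised by the lifting property against
morphisms of finitely presented modules. -/
def IsPureMonoMod {M N : ModCat P} (f : M ⟶ N) : Prop :=
  Mono f ∧ ∀ (a b : ModCat P) (g : a ⟶ b) (u : a ⟶ M) (v : b ⟶ N),
    FinPres P a → FinPres P b → u ≫ f = g ≫ v → ∃ w : b ⟶ M, g ≫ w = u

/-- A module is absolutely pure if every monomorphism out of it is pure. -/
def AbsPure (F : ModCat P) : Prop :=
  ∀ (G : ModCat P) (f : F ⟶ G), Mono f → IsPureMonoMod P f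

/-- The part of the Ziegler spectrum of the module category consisting of (classes of)
absolutely pure modules; with the subspace topology this is `Zg(Abs-T^c)`. -/
def ZgAbsSet : Set (Zg (FinPres P)) :=
  {x | ∃ N : ZgPt (FinPres P), zgMk _ N = x ∧ AbsPure P N.val}

/-- The functor `F^∨`, defined on objects by `F^∨(M) = Hom(F, (-,M))`. -/
noncomputable def Fvee (F : ModCat P) : A ⥤ AddCommGrpCat.{max u v} :=
  restYoneda P ⋙ preadditiveCoyoneda.obj (Opposite.op F)

end ModSide

end ZG


namespace DD

variable (Λ : Type) [Ring Λ]

/-- The homotopy category of (unbounded cochain) complexes of `Λ`-modules. -/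
abbrev Khtpy := HomotopyCategory (ModuleCat.{0} Λ) (ComplexShape.up ℤ)

/-- Complexes all of whose components are projective modules. -/
def ProjComps (X : Khtpy Λ) : Prop := ∀ n : ℤ, Projective (X.as.X n)

/-- `K(Proj-Λ)`: the homotopy category of complexes of projective `Λ`-modules. -/
abbrev KProj := ObjectProperty.FullSubcategory (ProjComps Λ)

/-- The object of `K(Proj-Λ)` determined by a complex of projectives. -/
def mkKProj (P : CochainComplex (ModuleCat.{0} Λ) ℤ) (h : ∀ n, Projective (P.X n)) :
    KProj Λ :=
  ⟨(HomotopyCategory.quotient (ModuleCat.{0} Λ) (ComplexShape.up ℤ)).obj P, h⟩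

end DD

namespace DD

variable (Λ : Type) [Ring Λ]

/-- The combinatorial data exhibiting a complex of projectives as a (homotopy) string complex:
the components decompose as finite direct sums of indecomposable projectives indexed by the
vertices of a walk (an interval in `ℤ`), and the differential is supported on adjacent pairs of
walk vertices, through nonzero non-isomorphisms. -/
structure StringData (P : CochainComplex (ModuleCat.{0} Λ) ℤ) where
  S : Set ℤ
  ordConn : S.OrdConnected
  nonEmpty : S.Nonempty
  deg : S → ℤ
  step : ∀ (i : ℤ) (h1 : i ∈ S) (h2 : i + 1 ∈ S),
    deg ⟨i + 1, h2⟩ = deg ⟨i, h1⟩ + 1 ∨ deg ⟨i + 1, h2⟩ = deg ⟨i, h1⟩ - 1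
  Q : S → ModuleCat.{0} Λ
  Qproj : ∀ i, Projective (Q i)
  Qindec : ∀ i, ¬ IsZero (Q i) ∧ ∀ e : Q i ⟶ Q i, e ≫ e = e → e = 0 ∨ e = 𝟙 (Q i)
  fib : ∀ n : ℤ, Fintype {i : S // deg i = n}
  iso : ∀ n : ℤ, P.X n ≅ (haveI := fib n; (⨁ fun i : {i : S // deg i = n} => Q i.1))
  entry_adj : ∀ n : ℤ,
    haveI := fib n; haveI := fib (n + 1);
    ∀ (i : {i : S // deg i = n}) (j : {i : S // deg i = n + 1}),
      ((biproduct.ι (fun i : {i : S // deg i = n} => Q i.1) i ≫ (iso n).inv ≫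
          P.d n (n + 1) ≫ (iso (n + 1)).hom ≫
          biproduct.π (fun i : {i : S // deg i = n + 1} => Q i.1) j) ≠ 0)
        ↔ (((j.1 : ℤ) = (i.1 : ℤ) + 1) ∨ ((j.1 : ℤ) = (i.1 : ℤ) - 1))
  entry_noniso : ∀ n : ℤ,
    haveI := fib n; haveI := fib (n + 1);
    ∀ (i : {i : S // deg i = n}) (j : {i : S // deg i = n + 1}),
      ¬ IsIso (biproduct.ι (fun i : {i : S // deg i = n} => Q i.1) i ≫ (iso n).inv ≫
          P.d n (n + 1) ≫ (iso (n + 1)).hom ≫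
          biproduct.π (fun i : {i : S // deg i = n + 1} => Q i.1) j)

/-- A string complex: an object of `K(Proj-Λ)` isomorphic to the complex of a homotopy string. -/
def IsStr (X : KProj Λ) : Prop :=
  ∃ (P : CochainComplex (ModuleCat.{0} Λ) ℤ) (h : ∀ n, Projective (P.X n))
    (_ : StringData Λ P), Nonempty (X ≅ mkKProj Λ P h)

/-- A perfect string complex: the homotopy string is finite. -/
def IsPerfectStr (X : KProj Λ) : Prop :=
  ∃ (P : CochainComplex (ModuleCat.{0} Λ) ℤ) (h : ∀ n, Projective (P.X n))
    (D : StringData Λ P), D.S.Finite ∧ Nonempty (X ≅ mkKProj Λ P h)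

/-- A right-infinite string complex: the homotopy string is infinite in exactly one direction,
with degrees unbounded above. -/
def IsRightInfStr (X : KProj Λ) : Prop :=
  ∃ (P : CochainComplex (ModuleCat.{0} Λ) ℤ) (h : ∀ n, Projective (P.X n))
    (D : StringData Λ P), (BddBelow (Set.range D.deg) ∧ ¬ BddAbove (Set.range D.deg)) ∧
      Nonempty (X ≅ mkKProj Λ P h)

/-- A left-infinite string complex: the homotopy string is infinite in exactly one direction,
with degrees unbounded below. -/
def IsLeftInfStr (X : KProj Λ) : Prop :=
  ∃ (P : CochainComplex (ModuleCat.{0} Λ) ℤ) (h : ∀ n, Projective (P.X n))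
    (D : StringData Λ P), (¬ BddBelow (Set.range D.deg) ∧ BddAbove (Set.range D.deg)) ∧
      Nonempty (X ≅ mkKProj Λ P h)

/-- A two-sided string complex: the homotopy string is infinite in both directions. -/
def IsTwoSidedStr (X : KProj Λ) : Prop :=
  ∃ (P : CochainComplex (ModuleCat.{0} Λ) ℤ) (h : ∀ n, Projective (P.X n))
    (D : StringData Λ P), (¬ BddBelow (Set.range D.deg) ∧ ¬ BddAbove (Set.range D.deg)) ∧
      Nonempty (X ≅ mkKProj Λ P h)

end DD

namespace DD

open ZG

variable (k : Type) [Field k] [IsAlgClosed k]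
variable (Λ : Type) [Ring Λ] [Algebra k Λ] [FiniteDimensional k Λ]

/-- Membership (up to isomorphism) in the image of `D^b(mod-Λ) ≃ K^{-,b}(proj-Λ)` inside
`K(Proj-Λ)`: isomorphic to a bounded-above complex of finitely generated projectives with
bounded cohomology. -/
def IsDbObj (X : KProj Λ) : Prop :=
  ∃ Y : KProj Λ,
    ((∃ N : ℤ, ∀ n : ℤ, N ≤ n → IsZero (Y.obj.as.X n)) ∧
     (∀ n : ℤ, Module.Finite Λ (Y.obj.as.X n)) ∧
     (∃ N : ℤ, ∀ n : ℤ, n ≤ N → IsZero (Y.obj.as.homology n))) ∧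
    Nonempty (X ≅ Y)

/-- The dimension over `k` of the `n`-th cohomology of a complex. -/
noncomputable def cohomDim (X : KProj Λ) (n : ℤ) : ℕ :=
  Module.finrank k (RestrictScalars k Λ (X.obj.as.homology n))

/-- `Λ` is derived-discrete: for every cohomology dimension vector there are only finitely
many isomorphism classes of indecomposable objects of `D^b(mod-Λ)` realising it. -/
def IsDerivedDiscrete : Prop :=
  ∀ d : ℤ → ℕ, Set.Finite
    {q : Quotient (isIsomorphicSetoid (KProj Λ)) |
      ∃ X : KProj Λ, Quotient.mk _ X = q ∧ IsDbObj Λ X ∧ ZG.Indec X ∧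
        ∀ n : ℤ, cohomDim k Λ X n = d n}

/-- `Λ` is piecewise hereditary of Dynkin type, i.e. derived-finite: up to shift and
isomorphism there are only finitely many indecomposable objects in `D^b(mod-Λ)`. -/
def IsPwHereditaryDynkin : Prop :=
  ∃ (nn : ℕ) (f : Fin nn → KProj Λ), ∀ X : KProj Λ, IsDbObj Λ X → ZG.Indec X →
    ∃ (i : Fin nn) (s : ℤ),
      Nonempty ((shiftFunctor (Khtpy Λ) s).obj X.obj ≅ (f i).obj)

/-- `Λ` has finite global dimension. -/
def FinGlobalDim : Prop :=
  ∃ nn : ℕ, ∀ M : ModuleCat.{0} Λ, ∃ Pr : ProjectiveResolution M,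
    ∀ i : ℕ, nn < i → IsZero (Pr.complex.X i)

end DD

namespace ZG

/-- The module structure on `Hom(C,N)` over the endomorphism ring of `N`, by post-composition. -/
noncomputable def homEndModule {A : Type u} [Category.{v} A] [Preadditive A] (C N : A) :
    Module (End N) (C ⟶ N) where
  smul φ f := f ≫ φ
  one_smul f := Category.comp_id f
  mul_smul φ ψ f := (Category.assoc f ψ φ).symm
  smul_zero φ := Limits.zero_comp
  smul_add φ f g := Preadditive.add_comp _ _ _ _ _ _
  add_smul φ ψ f := Preadditive.comp_add _ _ _ _ _ _
  zero_smul f := Limits.comp_zero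

/-- An object `N` is endofinite if, for every compact `C`, the group `Hom(C,N)` has finite
length as a module over the endomorphism ring of `N`. -/
def Endofinite {A : Type u} [Category.{v} A] [Preadditive A] (N : A) : Prop :=
  ∀ C : A, IsCompactObj C →
    letI : Module (End N) (C ⟶ N) := homEndModule C N
    IsFiniteLength (End N) (C ⟶ N)

/-- An object `N` is Σ-pure-injective if every set-indexed coproduct of copies of `N` is
pure-injective. -/
def SigmaPureInj {A : Type u} [Category.{v} A] [Preadditive A] (P : A → Prop) (N : A) : Prop :=
  ∀ (I : Type v) [HasCoproduct (fun _ : I => N)], PureInj P (∐ fun _ : I => N)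

end ZG

namespace DD

open ZG

variable (k : Type) [Field k] [IsAlgClosed k]
variable (Λ : Type) [Ring Λ] [Algebra k Λ] [FiniteDimensional k Λ]

/-- `Λ` is a derived-discrete algebra of type `(r,n,m)`, i.e. derived equivalent to the gentle
one-cycle algebra `Λ(r,n,m)` of Bobiński–Geiß–Skowroński: in particular it is derived-discrete,
not piecewise hereditary of Dynkin type, `1 ≤ r ≤ n`, it has `n + m` simple modules, and its
global dimension is infinite exactly when `r = n`. -/
structure DiscreteAlgType (r n m : ℕ) : Prop where
  discrete : IsDerivedDiscrete k Λ
  notDynkin : ¬ IsPwHereditaryDynkin Λ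
  one_le_r : 1 ≤ r
  r_le_n : r ≤ n
  simples : ∃ f : Fin (n + m) → ModuleCat.{0} Λ,
    (∀ i, IsSimpleModule Λ (f i)) ∧ (∀ i j, Nonempty (f i ≅ f j) → i = j) ∧
    ∀ M : ModuleCat.{0} Λ, IsSimpleModule Λ M → ∃ i, Nonempty (M ≅ f i)
  gldim_iff : ¬ FinGlobalDim Λ ↔ r = n

/-- The forward Hom-hammock of `A` inside the string complexes. -/
def Hfwd (A : KProj Λ) : Set (KProj Λ) :=
  {X | IsStr Λ X ∧ ∃ f : A ⟶ X, f ≠ 0}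

/-- The forward Hom-hammock of `A` inside the indecomposables of `K^{-,b}(proj-Λ)`. -/
def HomFwdDb (A : KProj Λ) : Set (KProj Λ) :=
  {X | IsDbObj Λ X ∧ ZG.Indec X ∧ ∃ f : A ⟶ X, f ≠ 0}

end DD

namespace DD

variable (Λ : Type) [Ring Λ]

/-- The labelling of the string complexes of a derived-discrete algebra of infinite global
dimension by the coordinates on the Auslander–Reiten quiver of `Str(Λ)` (the component index
is taken in `ℤ`, with periodicity `r` implementing the action of the suspension). -/
structure InfARData (r m : ℕ) where
  Xp : ℤ → ℤ → ℤ → KProj Λ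
  Zc : ℤ → ℤ → KProj Λ
  Xi : ℤ → ℤ → KProj Λ
  Zi : ℤ → KProj Λ
  Xp_perfect : ∀ c a b, a ≤ b → IsPerfectStr Λ (Xp c a b)
  Xp_enum : ∀ X : KProj Λ, IsPerfectStr Λ X → ZG.Indec X →
    ∃ c a b, a ≤ b ∧ Nonempty (X ≅ Xp c a b)
  Zc_rinf : ∀ c i, IsRightInfStr Λ (Zc c i)
  Zc_enum : ∀ X : KProj Λ, IsRightInfStr Λ X → ZG.Indec X → ∃ c i, Nonempty (X ≅ Zc c i)
  Xi_linf : ∀ c i, IsLeftInfStr Λ (Xi c i)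
  Xi_enum : ∀ X : KProj Λ, IsLeftInfStr Λ X → ZG.Indec X → ∃ c i, Nonempty (X ≅ Xi c i)
  Zi_two : ∀ c, IsTwoSidedStr Λ (Zi c)
  Zi_enum : ∀ X : KProj Λ, IsTwoSidedStr Λ X → ZG.Indec X → ∃ c, Nonempty (X ≅ Zi c)
  shift_Xp : ∀ c a b,
    Nonempty ((shiftFunctor (Khtpy Λ) (1 : ℤ)).obj (Xp c a b).obj ≅ (Xp (c + 1) a b).obj)
  shift_Zc : ∀ c i,
    Nonempty ((shiftFunctor (Khtpy Λ) (1 : ℤ)).obj (Zc c i).obj ≅ (Zc (c + 1) i).obj)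
  shift_Xi : ∀ c i,
    Nonempty ((shiftFunctor (Khtpy Λ) (1 : ℤ)).obj (Xi c i).obj ≅ (Xi (c + 1) i).obj)
  shift_Zi : ∀ c,
    Nonempty ((shiftFunctor (Khtpy Λ) (1 : ℤ)).obj (Zi c).obj ≅ (Zi (c + 1)).obj)
  period_Xp : ∀ c a b, Xp (c + r) a b = Xp c (a + r + m) (b + r + m)
  period_Zc : ∀ c i, Zc (c + r) i = Zc c (i + r + m)
  period_Xi : ∀ c i, Xi (c + r) i = Xi c (i + r + m)
  period_Zi : ∀ c, Zi (c + r) = Zi c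

/-- The labelling of the string complexes of a derived-discrete algebra of finite global
dimension by the coordinates on the Auslander–Reiten quiver of `Str(Λ)`. -/
structure FinARData (r n m : ℕ) where
  Xp : ℤ → ℤ → ℤ → KProj Λ
  Yp : ℤ → ℤ → ℤ → KProj Λ
  Zp : ℤ → ℤ → ℤ → KProj Λ
  Xinf : ℤ → ℤ → KProj Λ
  Xminf : ℤ → ℤ → KProj Λ
  Yinf : ℤ → ℤ → KProj Λ
  Yminf : ℤ → ℤ → KProj Λ
  Zinf : ℤ → KProj Λ
  Xp_perfect : ∀ c a b, a ≤ b → IsPerfectStr Λ (Xp c a b)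
  Yp_perfect : ∀ c a b, b ≤ a → IsPerfectStr Λ (Yp c a b)
  Zp_perfect : ∀ c a b, IsPerfectStr Λ (Zp c a b)
  perfect_enum : ∀ X : KProj Λ, IsPerfectStr Λ X → ZG.Indec X →
    (∃ c a b, a ≤ b ∧ Nonempty (X ≅ Xp c a b)) ∨
    (∃ c a b, b ≤ a ∧ Nonempty (X ≅ Yp c a b)) ∨
    (∃ c a b, Nonempty (X ≅ Zp c a b))
  Xinf_rinf : ∀ c i, IsRightInfStr Λ (Xinf c i)
  Yminf_rinf : ∀ c i, IsRightInfStr Λ (Yminf c i)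
  rinf_enum : ∀ X : KProj Λ, IsRightInfStr Λ X → ZG.Indec X →
    (∃ c i, Nonempty (X ≅ Xinf c i)) ∨ (∃ c i, Nonempty (X ≅ Yminf c i))
  Xminf_linf : ∀ c i, IsLeftInfStr Λ (Xminf c i)
  Yinf_linf : ∀ c i, IsLeftInfStr Λ (Yinf c i)
  linf_enum : ∀ X : KProj Λ, IsLeftInfStr Λ X → ZG.Indec X →
    (∃ c i, Nonempty (X ≅ Xminf c i)) ∨ (∃ c i, Nonempty (X ≅ Yinf c i))
  Zinf_two : ∀ c, IsTwoSidedStr Λ (Zinf c)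
  Zinf_enum : ∀ X : KProj Λ, IsTwoSidedStr Λ X → ZG.Indec X → ∃ c, Nonempty (X ≅ Zinf c)
  shift_Xp : ∀ c a b,
    Nonempty ((shiftFunctor (Khtpy Λ) (1 : ℤ)).obj (Xp c a b).obj ≅ (Xp (c + 1) a b).obj)
  shift_Yp : ∀ c a b,
    Nonempty ((shiftFunctor (Khtpy Λ) (1 : ℤ)).obj (Yp c a b).obj ≅ (Yp (c + 1) a b).obj)
  shift_Zp : ∀ c a b,
    Nonempty ((shiftFunctor (Khtpy Λ) (1 : ℤ)).obj (Zp c a b).obj ≅ (Zp (c + 1) a b).obj)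
  period_Xp : ∀ c a b, Xp (c + r) a b = Xp c (a + r + m) (b + r + m)
  period_Yp : ∀ c a b, Yp (c + r) a b = Yp c (a + r - n) (b + r - n)
  period_Zp : ∀ c a b, Zp (c + r) a b = Zp c (a + r + m) (b + r - n)
  period_Xinf : ∀ c i, Xinf (c + r) i = Xinf c (i + r + m)
  period_Xminf : ∀ c i, Xminf (c + r) i = Xminf c (i + r + m)
  period_Yinf : ∀ c i, Yinf (c + r) i = Yinf c (i + r - n)
  period_Yminf : ∀ c i, Yminf (c + r) i = Yminf c (i + r - n)
  period_Zinf : ∀ c, Zinf (c + r) = Zinf c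

/-- A `1`-simple morphism, for `Λ` of finite global dimension (with respect to some choice of
Auslander–Reiten coordinates on `Str(Λ)`). -/
def IsOneSimpleFin [HasBinaryBiproducts (KProj Λ)] (r n m : ℕ)
    {A B : KProj Λ} (h : A ⟶ B) : Prop :=
  ∃ D : FinARData Λ r n m,
    (∃ (c i j t : ℤ) (_ : A ≅ D.Xp c i j) (eB : B ≅ (D.Xp c (i + 1) j ⊞ D.Zp c i t)),
        h ≫ eB.hom ≫ biprod.fst ≠ 0 ∧ h ≫ eB.hom ≫ biprod.snd ≠ 0) ∨
    (∃ (c i j t : ℤ) (_ : A ≅ D.Yp c i j) (eB : B ≅ (D.Yp c i (j + 1) ⊞ D.Zp c t j)),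
        h ≫ eB.hom ≫ biprod.fst ≠ 0 ∧ h ≫ eB.hom ≫ biprod.snd ≠ 0) ∨
    (∃ (c i j t : ℤ) (_ : A ≅ D.Zp c i j) (eB : B ≅ (D.Zp c (i + 1) j ⊞ D.Xp (c + 1) t (i - 1))),
        h ≫ eB.hom ≫ biprod.fst ≠ 0 ∧ h ≫ eB.hom ≫ biprod.snd ≠ 0) ∨
    (∃ (c i j t : ℤ) (_ : A ≅ D.Zp c i j) (eB : B ≅ (D.Zp c i (j + 1) ⊞ D.Yp (c + 1) (j - 1) t)),
        h ≫ eB.hom ≫ biprod.fst ≠ 0 ∧ h ≫ eB.hom ≫ biprod.snd ≠ 0)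

/-- A `1`-simple morphism, for `Λ` of infinite global dimension (with respect to some choice of
Auslander–Reiten coordinates on `Str(Λ)`). -/
def IsOneSimpleInf [HasBinaryBiproducts (KProj Λ)] (r m : ℕ)
    {A B : KProj Λ} (h : A ⟶ B) : Prop :=
  ∃ D : InfARData Λ r m,
    (∃ (c i j : ℤ) (_ : A ≅ D.Xp c i j) (eB : B ≅ (D.Xp c (i + 1) j ⊞ D.Zc c i)),
        h ≫ eB.hom ≫ biprod.fst ≠ 0 ∧ h ≫ eB.hom ≫ biprod.snd ≠ 0) ∨
    (∃ (c i j : ℤ) (_ : A ≅ D.Zc c j) (eB : B ≅ (D.Zc c (j + 1) ⊞ D.Xp (c + 1) i (j - 1))),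
        h ≫ eB.hom ≫ biprod.fst ≠ 0 ∧ h ≫ eB.hom ≫ biprod.snd ≠ 0)

end DD

/-!
A coherent subfunctor `G` of `F_f` is a quotient of some `Hom(X, -)` with `X` compact. By Yoneda,
the composite `Hom(X, -) ↠ G ↪ F_f` is `Hom(v, -)` followed by the projection
`Hom(C, -) ↠ F_f` for some `v : C ⟶ X`. Since `Hom(f, -)` dies in `F_f`, the map
`h = (v, f) : C ⟶ X ⊞ D` has the same image as `v`, and `f = h ≫ snd` through the compact
object `X ⊞ D`.
-/

open Opposite

section BinaryCoproductOfFunctors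

variable {A : Type*} [Category A] {C : Type*} [Category C] {J : Type*} [Category J]
  [HasColimitsOfShape (Discrete WalkingPair) C]

-- colimits of functors are computed pointwise, and colimits commute with binary coproducts
lemma preservesColimitsOfShape_of_isColimit_binaryCofan {F G : A ⥤ C} {c : BinaryCofan F G}
    (hc : IsColimit c) [PreservesColimitsOfShape J F] [PreservesColimitsOfShape J G] :
    PreservesColimitsOfShape J c.pt := by
  have : PreservesColimitsOfShape J (pair F G).flip :=
    preservesColimitsOfShape_of_evaluation _ _ fun ⟨j⟩ => by cases j <;> assumption
  exact preservesColimitsOfShape_of_natIso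
    ((colimitIsoFlipCompColim (pair F G)).symm ≪≫ (colimit.isColimit _).coconePointUniqueUpToIso hc)

end BinaryCoproductOfFunctors

lemma imageSubobject_comp_arrow {𝒞 : Type*} [Category 𝒞] [HasStrongEpiMonoFactorisations 𝒞]
    {X Y : 𝒞} (S : Subobject X) (e : Y ⟶ S) [StrongEpi e] : imageSubobject (e ≫ S.arrow) = S :=
  (Subobject.mk_eq_mk_of_comm _ _ (image.isoStrongEpiMono e S.arrow rfl)
    (image.isoStrongEpiMono_hom_comp_ι _ _ _)).symm.trans S.mk_arrow

section Coyoneda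

variable {T : Type u} [Category.{v} T] [Preadditive T]

instance additive_preadditiveCoyoneda :
    (preadditiveCoyoneda : Tᵒᵖ ⥤ T ⥤ AddCommGrpCat).Additive where
  map_add {_ _ f g} := by
    ext _ x
    exact Preadditive.add_comp _ _ _ f.unop g.unop x

theorem ZG.IsCompactObj.biprod {C D : T} [HasBinaryBiproduct C D] (hC : ZG.IsCompactObj C)
    (hD : ZG.IsCompactObj D) : ZG.IsCompactObj (C ⊞ D) := fun ι => by
  obtain ⟨_⟩ := hC ι
  obtain ⟨_⟩ := hD ι
  have := preservesBinaryBiproducts_of_preservesBiproducts (preadditiveCoyoneda : Tᵒᵖ ⥤ _)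
  exact ⟨preservesColimitsOfShape_of_isColimit_binaryCofan
    (isBinaryBilimitOfPreserves preadditiveCoyoneda (BinaryBiproduct.isBilimit C D).op).isColimit⟩

lemma ZG.IsCoh.exists_epi {P : T → Prop} {F : ZG.ModA T} (hF : ZG.IsCoh P F) :
    ∃ X, P X ∧ ∃ e : preadditiveCoyoneda.obj (op X) ⟶ F, Epi e := by
  obtain ⟨X, _, _, hX, -, ⟨i⟩⟩ := hF
  exact ⟨X, hX, cokernel.π _ ≫ i.inv, epi_comp' inferInstance (IsIso.epi_of_iso i.inv)⟩

lemma preadditiveCoyoneda_obj_hom_app {X Y : T} {F : T ⥤ AddCommGrpCat.{v}}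
    (α : preadditiveCoyoneda.obj (op X) ⟶ F) (x : X ⟶ Y) :
    α.app Y x = F.map x (α.app X (𝟙 X)) := by
  rw [← NatTrans.naturality_apply α x (𝟙 X)]
  exact congr_arg (α.app Y) (Category.id_comp x).symm

lemma preadditiveCoyoneda_obj_hom_ext {X : T} {F : T ⥤ AddCommGrpCat.{v}}
    {α β : preadditiveCoyoneda.obj (op X) ⟶ F} (h : α.app X (𝟙 X) = β.app X (𝟙 X)) : α = β := by
  ext Y x
  exact (preadditiveCoyoneda_obj_hom_app α x).trans
    ((congr_arg (F.map x) h).trans (preadditiveCoyoneda_obj_hom_app β x).symm)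

lemma exists_preadditiveCoyoneda_map_comp_eq {C X : T} {F : T ⥤ AddCommGrpCat.{v}}
    (π : preadditiveCoyoneda.obj (op C) ⟶ F) [Epi π] (α : preadditiveCoyoneda.obj (op X) ⟶ F) :
    ∃ v : C ⟶ X, preadditiveCoyoneda.map v.op ≫ π = α := by
  obtain ⟨v, hv⟩ := (AddCommGrpCat.epi_iff_surjective (π.app X)).1 inferInstance (α.app X (𝟙 X))
  refine ⟨v, preadditiveCoyoneda_obj_hom_ext ?_⟩
  rw [NatTrans.comp_app, ← hv]
  exact congr_arg (π.app X) (Category.comp_id v)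

lemma preadditiveCoyoneda_map_biprodLift_comp {C X D : T} [HasBinaryBiproduct X D]
    (v : C ⟶ X) (f : C ⟶ D) {F : T ⥤ AddCommGrpCat.{v}} (π : preadditiveCoyoneda.obj (op C) ⟶ F)
    (hπ : preadditiveCoyoneda.map f.op ≫ π = 0) :
    preadditiveCoyoneda.map (biprod.lift v f).op ≫ π =
      preadditiveCoyoneda.map (biprod.inl : X ⟶ X ⊞ D).op ≫ preadditiveCoyoneda.map v.op ≫ π := by
  rw [biprod.lift_eq, op_add, Functor.map_add, Preadditive.add_comp, op_comp, Functor.map_comp,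
    Category.assoc, op_comp, Functor.map_comp, Category.assoc, hπ, comp_zero, add_zero]

lemma imageSubobject_preadditiveCoyoneda_map_biprodLift_comp {C X D : T}
    [HasBinaryBiproduct X D] (v : C ⟶ X) (f : C ⟶ D) {F : T ⥤ AddCommGrpCat.{v}}
    (π : preadditiveCoyoneda.obj (op C) ⟶ F) (hπ : preadditiveCoyoneda.map f.op ≫ π = 0) :
    imageSubobject (preadditiveCoyoneda.map (biprod.lift v f).op ≫ π) =
      imageSubobject (preadditiveCoyoneda.map v.op ≫ π) := by
  have hv : preadditiveCoyoneda.map v.op ≫ π = preadditiveCoyoneda.map (biprod.fst : X ⊞ D ⟶ X).op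
      ≫ preadditiveCoyoneda.map (biprod.lift v f).op ≫ π := by
    rw [← Functor.map_comp_assoc, ← op_comp, biprod.lift_fst]
  refine le_antisymm ?_ ?_
  · rw [preadditiveCoyoneda_map_biprodLift_comp v f π hπ]
    exact imageSubobject_comp_le _ _
  · rw [hv]
    exact imageSubobject_comp_le _ _

end Coyoneda

section Statement13

open CategoryTheory CategoryTheory.Limits ZG DD

theorem stmt13 (T : Type u) [Category.{v} T] [Preadditive T] [HasZeroObject T]
    [HasShift T ℤ] [∀ n : ℤ, (shiftFunctor T n).Additive] [Pretriangulated T]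
    [HasCoproducts.{v} T] (hcg : ZG.CompactlyGenerated (A := T))
    {C D : T} (hC : ZG.IsCompactObj C) (hD : ZG.IsCompactObj D) (f : C ⟶ D)
    (G : Subobject (ZG.Ff f))
    (hG : ZG.IsCoh (fun X : T => ZG.IsCompactObj X) (Subobject.underlying.obj G)) :
    ∃ (E : T) (_ : ZG.IsCompactObj E) (h : C ⟶ E) (g : E ⟶ D), f = h ≫ g ∧
      G = imageSubobject
        (preadditiveCoyoneda.map h.op ≫ cokernel.π (preadditiveCoyoneda.map f.op)) := by
  obtain ⟨X, hX, e, _⟩ := hG.exists_epi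
  obtain ⟨v, hv⟩ :=
    exists_preadditiveCoyoneda_map_comp_eq (cokernel.π (preadditiveCoyoneda.map f.op)) (e ≫ G.arrow)
  have : HasFiniteCoproducts T := hasFiniteCoproducts_of_hasCoproducts.{v} T
  have : HasBinaryBiproducts T := HasBinaryBiproducts.of_hasBinaryCoproducts
  refine ⟨X ⊞ D, hX.biprod hD, biprod.lift v f, biprod.snd, (biprod.lift_snd v f).symm, ?_⟩
  have := strongEpi_of_epi e
  rw [imageSubobject_preadditiveCoyoneda_map_biprodLift_comp v f _ (cokernel.condition _), hv]
  exact (imageSubobject_comp_arrow G e).symm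

end Statement13
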